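/- arXiv:1810.07484 — 7 statements merged into one kernel-verified Lean document; each statement's English description precedes it below -/
import Mathlib

section
/- The delayed exponential function e_r^{kt}, defined piecewise by e_r^{kt}=0 for t<-r, e_r^{kt}=1 for -r≤t<0, and e_r^{kt}=∑_{j=0}^{m} k^j (t-(j-1)r)^j / j! for (m-1)r ≤ t < mr (m≥1), satisfies e_r^{kt} ≤ e^{kt} for all t ≥ 0 when k ≥ 0. -/
open Real

noncomputable def delayedExp (r k : ℝ) (t : ℝ) : ℝ :=
  if t < -r then 0
  else if t < 0 then 1
  else ∑ j ∈ Finset.range (⌊t / r⌋.toNat + 2),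
    k ^ j * (t - ((j : ℝ) - 1) * r) ^ j / (Nat.factorial j)

theorem stmt_0 (r k : ℝ) (hr : 0 < r) (hk : 0 ≤ k) :
    ∀ t ≥ (0 : ℝ), delayedExp r k t ≤ Real.exp (k * t) := by
  intro t ht
  have h1 : ¬ t < -r := by linarith
  have h2 : ¬ t < 0 := by linarith
  rw [delayedExp, if_neg h1, if_neg h2]
  have htr : (0:ℝ) ≤ t / r := div_nonneg ht hr.le
  calc ∑ j ∈ Finset.range (⌊t / r⌋.toNat + 2),
        k ^ j * (t - ((j : ℝ) - 1) * r) ^ j / (Nat.factorial j)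
      ≤ ∑ j ∈ Finset.range (⌊t / r⌋.toNat + 2), (k * t) ^ j / (Nat.factorial j) := by
        apply Finset.sum_le_sum
        intro j hj
        rcases Nat.eq_zero_or_pos j with rfl | hj1
        · simp
        have hjle : (j : ℝ) ≤ ⌊t / r⌋.toNat + 1 := by
          exact_mod_cast Nat.lt_succ_iff.mp (Finset.mem_range.mp hj)
        have hfl : (⌊t / r⌋.toNat : ℝ) ≤ t / r := by
          have h0 : ((⌊t / r⌋.toNat : ℤ) : ℝ) = ((⌊t / r⌋ : ℤ) : ℝ) := by
            rw [Int.toNat_of_nonneg (Int.floor_nonneg.mpr htr)]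
          push_cast at h0
          rw [h0]; exact Int.floor_le (t / r)
        have hnn : 0 ≤ t - ((j : ℝ) - 1) * r := by
          have : ((j : ℝ) - 1) * r ≤ (t / r) * r := by
            apply mul_le_mul_of_nonneg_right _ hr.le
            linarith
          rw [div_mul_cancel₀ _ hr.ne'] at this
          linarith
        have hle : t - ((j : ℝ) - 1) * r ≤ t := by
          have : 0 ≤ ((j : ℝ) - 1) * r := by
            apply mul_nonneg _ hr.le
            have : (1:ℝ) ≤ j := by exact_mod_cast hj1
            linarith
          linarith
        have : k ^ j * (t - ((j : ℝ) - 1) * r) ^ j ≤ k ^ j * t ^ j := by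
          exact mul_le_mul_of_nonneg_left (pow_le_pow_left₀ hnn hle j) (pow_nonneg hk j)
        rw [mul_pow]
        exact div_le_div_of_nonneg_right this (by positivity)
    _ ≤ Real.exp (k * t) := Real.sum_le_exp_of_nonneg (by positivity) _
end

section
/- The delayed exponential function e_r^{kt} is the unique continuous solution on [0,∞) of the delayed ODE z'(t) = k z(t - r) with initial condition z(s) = 1 for s ∈ [-r, 0]. -/
/-!
Writing `(x)₊ = max x 0`, the delayed exponential is the finite sum
`∑ⱼ kʲ (t - (j - 1) r)₊ʲ / j!` on `[-r, (N - 1) r)` for every `N` large enough, since the terms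
with `(j - 1) r ≥ t` vanish. The truncated powers `(x)₊ʲ` are differentiable for `j ≥ 2`, and the
derivative of the `(j + 1)`-st term is `k` times the `j`-th term delayed by `r`, which gives the
delay equation. Uniqueness is the method of steps: the difference of two solutions vanishes on
`[-r, 0]`, and if it vanishes on `[-r, n r]` then its derivative vanishes on `(n r, (n + 1) r)`.
-/

open Real

open Set Filter Topology
open scoped Nat

theorem hasDerivAt_max_zero_pow {x : ℝ} {n : ℕ} (h : 2 ≤ n ∨ 0 < x) :
    HasDerivAt (fun t => max t 0 ^ n) (n * max x 0 ^ (n - 1)) x := by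
  rcases lt_trichotomy x 0 with hx | rfl | hx
  · have hn : n - 1 ≠ 0 := by have := h.resolve_right hx.not_gt; omega
    have hzero : (fun t => max t 0 ^ n) =ᶠ[𝓝 x] fun _ => 0 := by
      filter_upwards [Iio_mem_nhds hx] with t ht
      rw [max_eq_right (le_of_lt ht), zero_pow (by omega)]
    rw [max_eq_right hx.le, zero_pow hn, mul_zero]
    exact (hasDerivAt_const x 0).congr_of_eventuallyEq hzero
  · have hn : n - 1 ≠ 0 := by have := h.resolve_right (lt_irrefl 0); omega
    rw [max_self, zero_pow hn, mul_zero, ← hasDerivWithinAt_univ, ← Iic_union_Ici]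
    refine HasDerivWithinAt.union ?_ ?_
    · refine (hasDerivWithinAt_const 0 _ 0).congr (fun t ht => ?_) (by simp; omega)
      rw [max_eq_right ht, zero_pow (by omega)]
    · have := (hasDerivAt_pow n (0 : ℝ)).hasDerivWithinAt (s := Ici 0)
      rw [zero_pow hn, mul_zero] at this
      exact this.congr (fun t ht => by rw [max_eq_left ht]) (by simp)
  · have hpos : (fun t => max t 0 ^ n) =ᶠ[𝓝 x] fun t => t ^ n := by
      filter_upwards [Ioi_mem_nhds hx] with t ht
      rw [max_eq_left (le_of_lt ht)]
    rw [max_eq_left hx.le]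
    exact (hasDerivAt_pow n x).congr_of_eventuallyEq hpos

noncomputable def delayedExpTerm (r k : ℝ) (j : ℕ) (t : ℝ) : ℝ :=
  k ^ j * max (t - (j - 1) * r) 0 ^ j / j !

section DelayedExpTerm

variable {r k t : ℝ} {j : ℕ}

theorem delayedExpTerm_zero : delayedExpTerm r k 0 t = 1 := by
  simp [delayedExpTerm]

theorem delayedExpTerm_eq_zero (hj : j ≠ 0) (ht : t ≤ (j - 1) * r) :
    delayedExpTerm r k j t = 0 := by
  rw [delayedExpTerm, max_eq_right (by linarith), zero_pow hj, mul_zero, zero_div]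

theorem delayedExpTerm_of_le (ht : (j - 1) * r ≤ t) :
    delayedExpTerm r k j t = k ^ j * (t - (j - 1) * r) ^ j / j ! := by
  rw [delayedExpTerm, max_eq_left (by linarith)]

theorem hasDerivAt_delayedExpTerm_succ (ht : 0 < t) :
    HasDerivAt (delayedExpTerm r k (j + 1)) (k * delayedExpTerm r k j (t - r)) t := by
  have hshift : 2 ≤ j + 1 ∨ 0 < t - j * r := by
    rcases j with _ | j
    · simpa using ht
    · omega
  have hpow := (hasDerivAt_max_zero_pow hshift).comp_sub_const t (j * r)
  have hterm : delayedExpTerm r k (j + 1) =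
      fun x => k ^ (j + 1) * max (x - j * r) 0 ^ (j + 1) / (j + 1)! := by
    funext x
    simp only [delayedExpTerm, Nat.cast_succ, add_sub_cancel_right]
  rw [hterm]
  refine ((hpow.const_mul _).div_const _).congr_deriv ?_
  simp only [delayedExpTerm, Nat.factorial_succ, Nat.add_sub_cancel]
  rw [show t - r - ((j : ℝ) - 1) * r = t - j * r by ring]
  push_cast
  field_simp
  ring

theorem hasDerivAt_sum_delayedExpTerm (N : ℕ) (ht : 0 < t) :
    HasDerivAt (fun x => ∑ j ∈ Finset.range (N + 1), delayedExpTerm r k j x)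
      (k * ∑ j ∈ Finset.range N, delayedExpTerm r k j (t - r)) t := by
  simp only [Finset.sum_range_succ', delayedExpTerm_zero, Finset.mul_sum]
  exact (HasDerivAt.fun_sum fun j _ => hasDerivAt_delayedExpTerm_succ ht).add_const 1

end DelayedExpTerm

theorem delayedExp_eqOn_sum {r : ℝ} (k : ℝ) (hr : 0 < r) (N : ℕ) :
    EqOn (delayedExp r k) (fun t => ∑ j ∈ Finset.range N, delayedExpTerm r k j t)
      (Ico (-r) ((N - 1) * r)) := by
  intro t ⟨ht, htN⟩
  show delayedExp r k t = ∑ j ∈ Finset.range N, delayedExpTerm r k j t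
  rcases lt_or_ge t 0 with ht0 | ht0
  · have hN : 0 < N := Nat.cast_pos.mp (pos_of_mul_pos_left (by linarith : 0 < (N : ℝ) * r) hr.le)
    rw [delayedExp, if_neg (not_lt.mpr ht), if_pos ht0, Finset.sum_eq_single_of_mem 0
      (Finset.mem_range.mpr hN) fun j _ hj => delayedExpTerm_eq_zero hj ?_, delayedExpTerm_zero]
    have : (1 : ℝ) ≤ j := Nat.one_le_cast.mpr (Nat.one_le_iff_ne_zero.mpr hj)
    nlinarith
  · set m := ⌊t / r⌋₊
    have hm : m * r ≤ t := (le_div_iff₀ hr).mp (Nat.floor_le (div_nonneg ht0 hr.le))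
    have hm' : t < (m + 1) * r := (div_lt_iff₀ hr).mp (Nat.lt_floor_add_one _)
    have hmN : m + 2 ≤ N := by
      by_contra! h
      have : (N : ℝ) ≤ m + 1 := by exact_mod_cast Nat.le_of_lt_succ h
      nlinarith
    rw [delayedExp, if_neg (not_lt.mpr ht), if_neg (not_lt.mpr ht0), Int.floor_toNat]
    symm
    rw [← Finset.sum_subset (Finset.range_subset_range.mpr hmN)]
    · refine Finset.sum_congr rfl fun j hj => delayedExpTerm_of_le ?_
      have : (j : ℝ) ≤ m + 1 := by exact_mod_cast Nat.le_of_lt_succ (Finset.mem_range.mp hj)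
      nlinarith
    · intro j _ hj
      have hj : m + 2 ≤ j := not_lt.mp (Finset.mem_range.not.mp hj)
      have : (m : ℝ) + 2 ≤ j := by exact_mod_cast hj
      exact delayedExpTerm_eq_zero (by omega) (by nlinarith)

theorem exists_nat_lt_sub_one_mul {r : ℝ} (hr : 0 < r) (t : ℝ) : ∃ N : ℕ, t < (N - 1) * r := by
  obtain ⟨N, hN⟩ := exists_nat_gt (t / r + 1)
  exact ⟨N, (div_lt_iff₀ hr).mp (by linarith)⟩

section DelayedExp

variable {r k : ℝ}

theorem delayedExp_eq_one {s : ℝ} (hs : s ∈ Icc (-r) 0) : delayedExp r k s = 1 := by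
  rcases hs.2.lt_or_eq with hs0 | rfl
  · rw [delayedExp, if_neg (not_lt.mpr hs.1), if_pos hs0]
  · have hr : 0 ≤ r := neg_nonpos.mp hs.1
    simp [delayedExp, Finset.sum_range_succ, hr]

theorem continuousOn_delayedExp (hr : 0 < r) : ContinuousOn (delayedExp r k) (Ici (-r)) := by
  intro t ht
  obtain ⟨N, hN⟩ := exists_nat_lt_sub_one_mul hr t
  have hsum : Continuous fun t => ∑ j ∈ Finset.range N, delayedExpTerm r k j t := by
    unfold delayedExpTerm
    fun_prop
  have hEq := delayedExp_eqOn_sum k hr N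
  have := hsum.continuousWithinAt.congr hEq (hEq ⟨ht, hN⟩)
  rw [← Ici_inter_Iio] at this
  exact (continuousWithinAt_inter (Iio_mem_nhds hN)).mp this

theorem hasDerivAt_delayedExp (hr : 0 < r) {t : ℝ} (ht : 0 < t) :
    HasDerivAt (delayedExp r k) (k * delayedExp r k (t - r)) t := by
  obtain ⟨N, hN⟩ := exists_nat_lt_sub_one_mul hr t
  have hnear : delayedExp r k =ᶠ[𝓝 t]
      fun x => ∑ j ∈ Finset.range (N + 1), delayedExpTerm r k j x :=
    (delayedExp_eqOn_sum k hr (N + 1)).eventuallyEq_of_mem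
      (Ico_mem_nhds (by linarith) (by push_cast; linarith))
  rw [delayedExp_eqOn_sum k hr N ⟨by linarith, by linarith⟩]
  exact (hasDerivAt_sum_delayedExpTerm N ht).congr_of_eventuallyEq hnear

end DelayedExp

theorem eq_of_forall_hasDerivAt_zero {f : ℝ → ℝ} {a b : ℝ} (hab : a ≤ b)
    (hf : ContinuousOn f (Icc a b)) (hf' : ∀ x ∈ Ioo a b, HasDerivAt f 0 x) : f b = f a := by
  rcases hab.eq_or_lt with rfl | hab
  · rfl
  obtain ⟨c, -, hc⟩ := exists_hasDerivAt_eq_slope f (fun _ => 0) hab hf hf'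
  rw [eq_comm, div_eq_zero_iff] at hc
  exact sub_eq_zero.mp (hc.resolve_right (sub_ne_zero.mpr hab.ne'))

theorem eqOn_Ici_of_hasDerivAt_delay {r k : ℝ} {z₁ z₂ : ℝ → ℝ} (hr : 0 < r)
    (hc₁ : ContinuousOn z₁ (Ici (-r))) (hc₂ : ContinuousOn z₂ (Ici (-r)))
    (hd₁ : ∀ t > 0, HasDerivAt z₁ (k * z₁ (t - r)) t)
    (hd₂ : ∀ t > 0, HasDerivAt z₂ (k * z₂ (t - r)) t)
    (h₀ : EqOn z₁ z₂ (Icc (-r) 0)) : EqOn z₁ z₂ (Ici (-r)) := by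
  have hsteps : ∀ n : ℕ, EqOn z₁ z₂ (Icc (-r) (n * r)) := by
    intro n
    induction n with
    | zero => simpa using h₀
    | succ n ih =>
      intro t ⟨ht, htn⟩
      rcases le_or_gt t (n * r) with h | h
      · exact ih ⟨ht, h⟩
      have hn : 0 ≤ (n : ℝ) * r := by positivity
      have hconst : z₁ t - z₂ t = z₁ (n * r) - z₂ (n * r) := by
        refine eq_of_forall_hasDerivAt_zero (f := fun x => z₁ x - z₂ x) h.le
          ((hc₁.sub hc₂).mono (Icc_subset_Ici_self.trans (Ici_subset_Ici.mpr (by linarith))))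
          fun x hx => ?_
        have hlag : z₁ (x - r) = z₂ (x - r) :=
          ih ⟨by linarith [hx.1], by push_cast at htn; linarith [hx.2]⟩
        have hx₀ : 0 < x := by linarith [hx.1]
        have := (hd₁ x hx₀).sub (hd₂ x hx₀)
        rwa [hlag, sub_self] at this
      have hleft := ih ⟨by linarith, le_rfl⟩
      linarith
  intro t ht
  obtain ⟨n, hn⟩ := exists_nat_ge (t / r)
  exact hsteps n ⟨ht, (div_le_iff₀ hr).mp hn⟩

theorem stmt_2 (r k : ℝ) (hr : 0 < r) :
    (ContinuousOn (delayedExp r k) (Set.Ici (-r)) ∧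
      (∀ s ∈ Set.Icc (-r) (0 : ℝ), delayedExp r k s = 1) ∧
      (∀ t > (0 : ℝ), HasDerivAt (delayedExp r k) (k * delayedExp r k (t - r)) t)) ∧
    (∀ z : ℝ → ℝ, ContinuousOn z (Set.Ici (-r)) →
      (∀ s ∈ Set.Icc (-r) (0 : ℝ), z s = 1) →
      (∀ t > (0 : ℝ), HasDerivAt z (k * z (t - r)) t) →
      ∀ t ∈ Set.Ici (-r), z t = delayedExp r k t) := by
  have hderiv : ∀ t > (0 : ℝ), HasDerivAt (delayedExp r k) (k * delayedExp r k (t - r)) t :=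
    fun t ht => hasDerivAt_delayedExp hr ht
  refine ⟨⟨continuousOn_delayedExp hr, fun s hs => delayedExp_eq_one hs, hderiv⟩, ?_⟩
  intro z hzc hz₀ hzd
  exact eqOn_Ici_of_hasDerivAt_delay hr hzc (continuousOn_delayedExp hr) hzd hderiv
    fun s hs => (hz₀ s hs).trans (delayedExp_eq_one hs).symm
end

section
/- For r > 0, k > 0, and any γ > 0, there exists a constant C > 0 such that e_r^{kt} ≤ C (1+t)^{-γ} e^{kt} for all t > 0, where e_r^{kt} is the delayed exponential function. -/
open Real

theorem stmt_3 (r k γ : ℝ) (hr : 0 < r) (hk : 0 < k) (hγ : 0 < γ) :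
    ∃ C > (0 : ℝ), ∀ t > (0 : ℝ),
      delayedExp r k t ≤ C * (1 + t) ^ (-γ) * Real.exp (k * t) := by
  obtain ⟨δ, hδ0, hδ2, hδkr⟩ : ∃ δ : ℝ, 0 < δ ∧ δ ≤ 1/2 ∧ 8*δ ≤ k*r :=
    ⟨min (1/2) (k*r/8), lt_min (by norm_num) (by positivity), min_le_left _ _,
      by have := min_le_right (1/2 : ℝ) (k*r/8); linarith⟩
  obtain ⟨θ, hθdef⟩ : ∃ θ : ℝ, θ = 1 - δ := ⟨_, rfl⟩
  have hθhalf : (1/2:ℝ) ≤ θ := by rw [hθdef]; linarith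
  have hθpos : 0 < θ := by linarith
  have hθ1 : θ < 1 := by rw [hθdef]; linarith
  obtain ⟨q, hqdef⟩ : ∃ q : ℝ, q = Real.exp (-(θ*k*r)) / θ := ⟨_, rfl⟩
  have hq0 : 0 ≤ q := by rw [hqdef]; positivity
  have hq1 : q < 1 := by
    rw [hqdef, div_lt_one hθpos]

    have h1 : θ*k*r + 1 < Real.exp (θ*k*r) :=
      Real.add_one_lt_exp (by positivity)
    have hkr0 : 0 < k*r := by positivity
    have hθθ : (1:ℝ)/4 ≤ θ*θ := by nlinarith
    have hkey : 2*δ ≤ θ*θ*(k*r) := by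
      nlinarith [mul_nonneg (by linarith : (0:ℝ) ≤ θ*θ - 1/4) hkr0.le]
    have h2 : 1 < θ * (1 + θ*k*r) := by
      have hθeq : θ = 1 - δ := hθdef
      nlinarith
    have h3 : 1 < θ * Real.exp (θ*k*r) := by nlinarith [Real.exp_pos (θ*k*r)]
    rw [Real.exp_neg]
    rw [inv_lt_iff_one_lt_mul₀ (Real.exp_pos _)]
    linarith
  obtain ⟨A, hAdef⟩ : ∃ A : ℝ, A = Real.exp (θ*k*r) / (1 - q) := ⟨_, rfl⟩
  have hA0 : 0 < A := by
    rw [hAdef]; apply div_pos (Real.exp_pos _); linarith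
  obtain ⟨ε, hε0, hε1, hεγ⟩ : ∃ ε : ℝ, 0 < ε ∧ ε ≤ 1 ∧ γ*ε ≤ δ*k := by
    refine ⟨min 1 (δ*k/γ), lt_min one_pos (by positivity), min_le_left _ _, ?_⟩
    have h := min_le_right (1:ℝ) (δ*k/γ)
    calc γ * min 1 (δ*k/γ) ≤ γ*(δ*k/γ) := mul_le_mul_of_nonneg_left h hγ.le
      _ = δ*k := by field_simp
  refine ⟨A * ε ^ (-γ), by positivity, fun t ht => ?_⟩
  -- Step 1: bound delayedExp by A * exp (θ*k*t)
  have key : delayedExp r k t ≤ A * Real.exp (θ*k*t) := by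
    rw [delayedExp, if_neg (by linarith), if_neg (by linarith)]
    have hmain : ∀ j ∈ Finset.range (⌊t / r⌋.toNat + 2),
        k ^ j * (t - ((j : ℝ) - 1) * r) ^ j / (Nat.factorial j)
          ≤ Real.exp (θ*k*t) * Real.exp (θ*k*r) * q ^ j := by
      intro j hj
      rw [Finset.mem_range] at hj
      have hjle : (j : ℝ) - 1 ≤ t / r := by
        have h1 : j ≤ ⌊t / r⌋.toNat + 1 := by omega
        have hfl : (0:ℤ) ≤ ⌊t / r⌋ := Int.floor_nonneg.mpr (by positivity)
        have h2 : (⌊t / r⌋.toNat : ℝ) ≤ t / r := by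
          calc (⌊t / r⌋.toNat : ℝ) = ((⌊t / r⌋.toNat : ℤ) : ℝ) := by push_cast; ring
            _ = ((⌊t / r⌋ : ℤ) : ℝ) := by rw [Int.toNat_of_nonneg hfl]
            _ ≤ t / r := Int.floor_le _
        have h3 : (j : ℝ) ≤ (⌊t / r⌋.toNat : ℝ) + 1 := by exact_mod_cast h1
        linarith
      have hx0 : 0 ≤ t - ((j : ℝ) - 1) * r := by
        have h4 : ((j : ℝ) - 1) * r ≤ (t / r) * r :=
          mul_le_mul_of_nonneg_right hjle hr.le
        rw [div_mul_cancel₀ _ hr.ne'] at h4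
        linarith
      set x : ℝ := t - ((j : ℝ) - 1) * r with hxdef
      have hterm : (θ*k*x) ^ j / (Nat.factorial j) ≤ Real.exp (θ*k*x) := by
        calc (θ*k*x) ^ j / (Nat.factorial j)
            ≤ ∑ i ∈ Finset.range (j+1), (θ*k*x) ^ i / (Nat.factorial i) :=
              Finset.single_le_sum (f := fun i => (θ*k*x) ^ i / (Nat.factorial i))
                (fun i _ => by positivity) (Finset.self_mem_range_succ j)
          _ ≤ Real.exp (θ*k*x) := Real.sum_le_exp_of_nonneg (by positivity) _
      have hθj : (0:ℝ) < θ ^ j := by positivity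
      have h5 : k ^ j * x ^ j / (Nat.factorial j)
          = ((θ*k*x) ^ j / (Nat.factorial j)) / θ ^ j := by
        rw [mul_pow, mul_pow]
        field_simp
      rw [h5]
      have h6 : ((θ*k*x) ^ j / (Nat.factorial j)) / θ ^ j
          ≤ Real.exp (θ*k*x) / θ ^ j :=
        by gcongr
      refine h6.trans (le_of_eq ?_)
      have hexpand : θ*k*x = θ*k*t + θ*k*r + (j:ℝ) * -(θ*k*r) := by
        rw [hxdef]; ring
      have hq_pow : q ^ j = Real.exp ((j:ℝ) * -(θ*k*r)) / θ ^ j := by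
        rw [hqdef, div_pow, ← Real.exp_nat_mul]
      have hprod : Real.exp (θ*k*t) * Real.exp (θ*k*r) * Real.exp ((j:ℝ) * -(θ*k*r))
          = Real.exp (θ*k*x) := by
        rw [← Real.exp_add, ← Real.exp_add, hexpand]
      rw [hq_pow, ← hprod]
      ring
    calc ∑ j ∈ Finset.range (⌊t / r⌋.toNat + 2),
          k ^ j * (t - ((j : ℝ) - 1) * r) ^ j / (Nat.factorial j)
        ≤ ∑ j ∈ Finset.range (⌊t / r⌋.toNat + 2),
          Real.exp (θ*k*t) * Real.exp (θ*k*r) * q ^ j :=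
          Finset.sum_le_sum hmain
      _ = Real.exp (θ*k*t) * Real.exp (θ*k*r) *
          ∑ j ∈ Finset.range (⌊t / r⌋.toNat + 2), q ^ j := by
          rw [Finset.mul_sum]
      _ ≤ Real.exp (θ*k*t) * Real.exp (θ*k*r) * (1/(1-q)) := by
          apply mul_le_mul_of_nonneg_left _ (by positivity)
          rw [le_div_iff₀ (by linarith : (0:ℝ) < 1 - q)]
          have h := mul_neg_geom_sum q (⌊t / r⌋.toNat + 2)
          have hqn : 0 ≤ q ^ (⌊t / r⌋.toNat + 2) := by positivity
          nlinarith
      _ = A * Real.exp (θ*k*t) := by rw [hAdef]; ring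
  -- Step 2: exp (θ*k*t) ≤ ε^(-γ) * (1+t)^(-γ) * exp (k*t)
  have hlog : Real.log (1+t) ≤ ε*t - Real.log ε := by
    have h1 : ε*(1+t) ≤ 1 + ε*t := by nlinarith
    have h2 : Real.log (1+t) = Real.log (ε*(1+t)) - Real.log ε := by
      rw [Real.log_mul hε0.ne' (by linarith)]; ring
    have h3 : Real.log (ε*(1+t)) ≤ Real.log (1+ε*t) :=
      Real.log_le_log (by positivity) h1
    have h4 : Real.log (1+ε*t) ≤ ε*t := by
      have := Real.log_le_sub_one_of_pos (x := 1+ε*t) (by positivity)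
      linarith
    linarith
  have hrpow1 : (1+t) ^ (-γ) = Real.exp (-γ * Real.log (1+t)) := by
    rw [Real.rpow_def_of_pos (by linarith)]; ring_nf
  have hrpow2 : ε ^ (-γ) = Real.exp (-γ * Real.log ε) := by
    rw [Real.rpow_def_of_pos hε0]; ring_nf
  have step2 : Real.exp (θ*k*t) ≤ ε ^ (-γ) * (1+t) ^ (-γ) * Real.exp (k*t) := by
    rw [hrpow1, hrpow2, ← Real.exp_add, ← Real.exp_add, Real.exp_le_exp]
    have hθkt : θ*k*t = k*t - δ*k*t := by rw [hθdef]; ring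
    have h5 : γ * Real.log (1+t) ≤ γ*ε*t - γ * Real.log ε := by
      have := mul_le_mul_of_nonneg_left hlog hγ.le
      linarith [mul_le_mul_of_nonneg_left hlog hγ.le]
    have h6 : γ*ε*t ≤ δ*k*t := mul_le_mul_of_nonneg_right hεγ ht.le
    rw [hθkt]
    nlinarith
  calc delayedExp r k t ≤ A * Real.exp (θ*k*t) := key
    _ ≤ A * (ε ^ (-γ) * (1+t) ^ (-γ) * Real.exp (k*t)) :=
        mul_le_mul_of_nonneg_left step2 hA0.le
    _ = A * ε ^ (-γ) * (1+t) ^ (-γ) * Real.exp (k*t) := by ring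
end

section
/- If k₁ ≥ k₂ ≥ 0 (with k₂ > 0) and r > 0, then there exist constants ε ∈ (0,1) and C > 0 such that e^{-k₁ t} e_r^{\bar k₂ t} ≤ C e^{-ε (k₁ - k₂) t} for all t > 0, where \bar k₂ = k₂ e^{k₁ r} and e_r^{\bar k₂ t} is the delayed exponential function. -/
/-!
Put `ε = 1 / (1 + k₁ r)`, `δ = ε (k₁ - k₂)` and `μ = k₁ - δ ∈ [k₂, k₁]`. Then `e^{-δ r} ≥ 1 - δ r`
gives `k₂ e^{k₁ r} ≤ μ e^{μ r}`, so `e^{μ (t + r)}` is a supersolution of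
`z'(t) = k₂ e^{k₁ r} z(t - r)` and dominates the delayed exponential, step by step in `t`.
Multiplying by `e^{-k₁ t}` gives the bound with `C = e^{μ r}`.
-/

open Real

open Finset Nat

namespace DelayedExp

variable {k r μ : ℝ}

noncomputable def shiftedSum (k r : ℝ) (n : ℕ) (s : ℝ) : ℝ :=
  ∑ j ∈ range (n + 1), k ^ j * (s - j * r) ^ j / j !

lemma hasDerivAt_shiftedSum_term (j : ℕ) (s : ℝ) :
    HasDerivAt (fun s => k ^ (j + 1) * (s - ↑(j + 1) * r) ^ (j + 1) / ↑(j + 1)!)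
      (k * (k ^ j * (s - r - j * r) ^ j / j !)) s := by
  refine ((((hasDerivAt_id s).sub_const (↑(j + 1) * r)).pow (j + 1)).const_mul (k ^ (j + 1))
    |>.div_const (↑(j + 1)! : ℝ)).congr_deriv ?_
  rw [factorial_succ, id]
  push_cast
  field_simp
  ring

lemma hasDerivAt_shiftedSum_succ (n : ℕ) (s : ℝ) :
    HasDerivAt (shiftedSum k r (n + 1)) (k * shiftedSum k r n (s - r)) s := by
  have hfun : shiftedSum k r (n + 1) =
      fun s => 1 + ∑ j ∈ range (n + 1), k ^ (j + 1) * (s - ↑(j + 1) * r) ^ (j + 1) / ↑(j + 1)! := by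
    funext s
    rw [shiftedSum, sum_range_succ', add_comm]
    simp
  rw [hfun, shiftedSum, mul_sum]
  exact (HasDerivAt.fun_sum fun j _ => hasDerivAt_shiftedSum_term j s).const_add 1

lemma shiftedSum_succ_self (n : ℕ) :
    shiftedSum k r (n + 1) ((n + 1) * r) = shiftedSum k r n ((n + 1) * r) := by
  rw [shiftedSum, sum_range_succ]
  simp [shiftedSum]

/-- Since `k ≤ μ e^{μ r}`, `e^{μ s}` is a supersolution of `z' = k z(· - r)`; on `[(n + 1) r, ∞)` the
gap `e^{μ s} - shiftedSum k r (n + 1) s` is nonnegative at the left end and nondecreasing. -/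
lemma shiftedSum_le_exp (hr : 0 ≤ r) (hk : 0 ≤ k) (hkμ : k ≤ μ * exp (μ * r)) :
    ∀ (n : ℕ) (s : ℝ), n * r ≤ s → shiftedSum k r n s ≤ exp (μ * s) := by
  intro n
  induction n with
  | zero =>
    intro s hs
    simp only [Nat.cast_zero, zero_mul] at hs
    have hμ : 0 ≤ μ := nonneg_of_mul_nonneg_left (hk.trans hkμ) (exp_pos _)
    simpa [shiftedSum] using one_le_exp (mul_nonneg hμ hs)
  | succ n ih =>
    intro s hs
    push_cast at hs
    set a : ℝ := (n + 1) * r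
    have hstart : shiftedSum k r (n + 1) a ≤ exp (μ * a) := by
      rw [shiftedSum_succ_self]
      exact ih a (by nlinarith)
    have hderiv (x : ℝ) : HasDerivAt (fun s => exp (μ * s) - shiftedSum k r (n + 1) s)
        (μ * exp (μ * x) - k * shiftedSum k r n (x - r)) x := by
      have := ((hasDerivAt_id x).const_mul μ).exp.fun_sub
        (hasDerivAt_shiftedSum_succ (k := k) (r := r) n x)
      simpa [mul_comm] using this
    have hmono : MonotoneOn (fun s => exp (μ * s) - shiftedSum k r (n + 1) s) (Set.Ici a) := by
      refine monotoneOn_of_deriv_nonneg (convex_Ici a)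
        (fun x _ => (hderiv x).continuousAt.continuousWithinAt)
        (fun x _ => (hderiv x).differentiableAt.differentiableWithinAt) fun x hx => ?_
      rw [interior_Ici, Set.mem_Ioi] at hx
      have hx' : n * r ≤ x - r := by linarith
      have hlag : k * shiftedSum k r n (x - r) ≤ μ * exp (μ * x) :=
        calc k * shiftedSum k r n (x - r) ≤ k * exp (μ * (x - r)) :=
              mul_le_mul_of_nonneg_left (ih _ hx') hk
          _ ≤ μ * exp (μ * r) * exp (μ * (x - r)) :=
              mul_le_mul_of_nonneg_right hkμ (exp_nonneg _)
          _ = μ * exp (μ * x) := by rw [mul_assoc, ← exp_add]; ring_nf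
      rw [(hderiv x).deriv]
      linarith
    have := hmono Set.self_mem_Ici (Set.mem_Ici.mpr hs) hs
    simp only at this
    linarith

lemma delayedExp_eq_shiftedSum {t : ℝ} (hr : 0 < r) (ht : 0 ≤ t) :
    delayedExp r k t = shiftedSum k r (⌊t / r⌋.toNat + 1) (t + r) := by
  rw [delayedExp, if_neg (by linarith), if_neg (by linarith), shiftedSum]
  refine sum_congr rfl fun j _ => ?_
  ring_nf

lemma delayedExp_le_exp {t : ℝ} (hr : 0 < r) (ht : 0 ≤ t) (hk : 0 ≤ k)
    (hkμ : k ≤ μ * exp (μ * r)) : delayedExp r k t ≤ exp (μ * (t + r)) := by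
  rw [delayedExp_eq_shiftedSum hr ht]
  refine shiftedSum_le_exp hr.le hk hkμ _ _ ?_
  have hfloor : (⌊t / r⌋.toNat : ℝ) * r ≤ t := by
    rw [← le_div_iff₀ hr, Int.floor_toNat]
    exact Nat.floor_le (by positivity)
  push_cast
  linarith

lemma mul_exp_le_mul_exp_sub {k₁ k₂ δ : ℝ} (hr : 0 ≤ r) (hδk₁ : δ ≤ k₁)
    (hδ : δ * (1 + k₁ * r) ≤ k₁ - k₂) :
    k₂ * exp (k₁ * r) ≤ (k₁ - δ) * exp ((k₁ - δ) * r) := by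
  have hexp : (k₁ - δ) * (1 - δ * r) ≤ (k₁ - δ) * exp (-(δ * r)) :=
    mul_le_mul_of_nonneg_left (by linarith [add_one_le_exp (-(δ * r))]) (by linarith)
  calc k₂ * exp (k₁ * r) ≤ (k₁ - δ) * (1 - δ * r) * exp (k₁ * r) :=
        mul_le_mul_of_nonneg_right (by nlinarith [mul_nonneg (sq_nonneg δ) hr]) (exp_nonneg _)
    _ ≤ (k₁ - δ) * exp (-(δ * r)) * exp (k₁ * r) := mul_le_mul_of_nonneg_right hexp (exp_nonneg _)
    _ = (k₁ - δ) * exp ((k₁ - δ) * r) := by rw [mul_assoc, ← exp_add]; ring_nf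

end DelayedExp

theorem stmt_4 (r k₁ k₂ : ℝ) (hr : 0 < r) (hk₁ : k₁ ≥ k₂) (hk₂ : k₂ > 0) :
    ∃ ε ∈ Set.Ioo (0 : ℝ) 1, ∃ C > (0 : ℝ), ∀ t > (0 : ℝ),
      Real.exp (-k₁ * t) * delayedExp r (k₂ * Real.exp (k₁ * r)) t ≤
        C * Real.exp (-ε * (k₁ - k₂) * t) := by
  have hk₁r : 0 < k₁ * r := mul_pos (hk₂.trans_le hk₁) hr
  set ε := 1 / (1 + k₁ * r)
  have hε : ε ∈ Set.Ioo (0 : ℝ) 1 := ⟨by positivity, by rw [div_lt_one (by positivity)]; linarith⟩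
  set δ := ε * (k₁ - k₂)
  have hδ : δ * (1 + k₁ * r) = k₁ - k₂ := by simp only [δ, ε]; field_simp
  have hδk₁ : δ ≤ k₁ := by nlinarith [hε.2]
  have hbound (t : ℝ) (ht : 0 ≤ t) :
      delayedExp r (k₂ * exp (k₁ * r)) t ≤ exp ((k₁ - δ) * (t + r)) :=
    DelayedExp.delayedExp_le_exp hr ht (by positivity)
      (DelayedExp.mul_exp_le_mul_exp_sub hr.le hδk₁ hδ.le)
  refine ⟨ε, hε, exp ((k₁ - δ) * r), exp_pos _, fun t ht => ?_⟩
  calc exp (-k₁ * t) * delayedExp r (k₂ * exp (k₁ * r)) t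
      ≤ exp (-k₁ * t) * exp ((k₁ - δ) * (t + r)) :=
        mul_le_mul_of_nonneg_left (hbound t ht.le) (exp_nonneg _)
    _ = exp ((k₁ - δ) * r) * exp (-ε * (k₁ - k₂) * t) := by
        simp only [δ, ← exp_add]
        ring_nf
end

section
/- The solution of the linear delayed ODE z'(t) + k₁ z(t) = k₂ z(t-r) for t > 0 with initial data z(s) = z₀(s) on [-r,0] (z₀ ∈ C¹) is given by z(t) = e^{-k₁(t+r)} e_r^{\bar k₂ t} z₀(-r) + ∫_{-r}^0 e^{-k₁(t-s)} e_r^{\bar k₂(t-r-s)} [z₀'(s) + k₁ z₀(s)] ds, where \bar k₂ = k₂ e^{k₁ r}. -/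
/-
Multiplying by `exp (k₁ t)` turns the equation into the pure delay equation `y' = K y(· - r)`
with `K = k₂ exp (k₁ r)` and initial function `φ s = exp (k₁ s) z₀ s`, so the claim is that `y`
equals `w t = E t φ(-r) + ∫_{-r}^0 E(t - r - s) φ'(s) ds`, where `E = e_r^{K ·}`.

`E` vanishes before `-r`, equals `1` on `[-r, 0]`, is continuous on `[-r, ∞)` and has right
derivative `K E(t - r)` everywhere; the last fact is seen by writing `E` as a sum of shifted
truncated powers `K^j (t - (j - 1) r)₊^j / j!`. By the fundamental theorem of calculus `w = φ` on
`[-r, 0]`, and by Fubini `w` satisfies the integral equation `w t = w 0 + K ∫_0^t w(u - r) du`,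
which `y` satisfies too. Both sides then agree on `[-r, ∞)` by the method of steps: on `[0, n r]`
the integral equation only involves values on `[-r, (n - 1) r]`.
-/

open Real

open Set Filter Topology MeasureTheory

section Fubini

variable {E : Type*} [NormedAddCommGroup E] [NormedSpace ℝ E] {f : ℝ → ℝ → E} {a b c d : ℝ}

lemma intervalIntegrable_intervalIntegral_of_integrableOn (hab : a ≤ b) (hcd : c ≤ d)
    (hf : IntegrableOn (Function.uncurry f) (Ioc a b ×ˢ Ioc c d)) :
    IntervalIntegrable (fun x => ∫ y in c..d, f x y) volume a b := by
  rw [intervalIntegrable_iff_integrableOn_Ioc_of_le hab]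
  rw [IntegrableOn, Measure.volume_eq_prod, ← Measure.prod_restrict] at hf
  simpa [IntegrableOn, intervalIntegral.integral_of_le hcd] using hf.integral_prod_left

lemma intervalIntegral_integral_swap (hab : a ≤ b) (hcd : c ≤ d)
    (hf : IntegrableOn (Function.uncurry f) (Ioc a b ×ˢ Ioc c d)) :
    ∫ x in a..b, ∫ y in c..d, f x y = ∫ y in c..d, ∫ x in a..b, f x y := by
  rw [IntegrableOn, Measure.volume_eq_prod, ← Measure.prod_restrict] at hf
  simp only [intervalIntegral.integral_of_le hab, intervalIntegral.integral_of_le hcd]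
  exact integral_integral_swap hf

end Fubini

lemma HasDerivWithinAt.comp_sub_const_Ici {f : ℝ → ℝ} {f' t : ℝ} (c : ℝ)
    (hf : HasDerivWithinAt f f' (Ici (t - c)) (t - c)) :
    HasDerivWithinAt (fun x => f (x - c)) f' (Ici t) t := by
  simpa [Function.comp_def] using hf.scomp t ((hasDerivAt_id t).sub_const c).hasDerivWithinAt
    fun x hx => sub_le_sub_right (mem_Ici.1 hx) c

lemma hasDerivAt_exp_mul {f : ℝ → ℝ} {f' c t : ℝ} (hf : HasDerivAt f f' t) :
    HasDerivAt (fun x => exp (c * x) * f x) (exp (c * t) * (f' + c * f t)) t :=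
  (((hasDerivAt_id t).const_mul c).exp.mul hf).congr_deriv (by simp; ring)

namespace DelayedExp

-- `x₊ ^ j / j!`, except that `truncPow 0` is the Heaviside step, so that `truncPow (j + 1)` has
-- right derivative `truncPow j` at every point.
noncomputable def truncPow (j : ℕ) (x : ℝ) : ℝ := if 0 ≤ x then x ^ j / j.factorial else 0

lemma truncPow_of_nonneg {j : ℕ} {x : ℝ} (hx : 0 ≤ x) : truncPow j x = x ^ j / j.factorial :=
  if_pos hx

lemma truncPow_of_neg {j : ℕ} {x : ℝ} (hx : x < 0) : truncPow j x = 0 :=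
  if_neg hx.not_ge

lemma truncPow_eventuallyEq_zero {j : ℕ} {x : ℝ} (hx : x < 0) : truncPow j =ᶠ[𝓝 x] 0 := by
  filter_upwards [Iio_mem_nhds hx] with y hy using truncPow_of_neg hy

lemma truncPow_nonneg (j : ℕ) (x : ℝ) : 0 ≤ truncPow j x := by
  unfold truncPow; split_ifs <;> positivity

lemma monotone_truncPow (j : ℕ) : Monotone (truncPow j) := by
  intro x y hxy
  rcases lt_or_ge x 0 with hx | hx
  · rw [truncPow_of_neg hx]; exact truncPow_nonneg j y
  · rw [truncPow_of_nonneg hx, truncPow_of_nonneg (hx.trans hxy)]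
    gcongr

lemma continuous_truncPow_succ (j : ℕ) : Continuous (truncPow (j + 1)) :=
  Continuous.if_le (by fun_prop) continuous_const continuous_const continuous_id
    fun x hx => by simp [← hx]

lemma hasDerivWithinAt_truncPow_succ (j : ℕ) (x : ℝ) :
    HasDerivWithinAt (truncPow (j + 1)) (truncPow j x) (Ici x) x := by
  rcases lt_or_ge x 0 with hx | hx
  · rw [truncPow_of_neg hx]
    exact (hasDerivAt_const x (0 : ℝ)).hasDerivWithinAt.congr_of_eventuallyEq
      (nhdsWithin_le_nhds (truncPow_eventuallyEq_zero hx)) (truncPow_of_neg hx)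
  · have hpow : HasDerivAt (fun y : ℝ => y ^ (j + 1) / (j + 1).factorial)
        (x ^ j / j.factorial) x := by
      refine ((hasDerivAt_pow (j + 1) x).div_const ((j + 1).factorial : ℝ)).congr_deriv ?_
      rw [Nat.factorial_succ]
      push_cast
      field_simp
    rw [truncPow_of_nonneg hx]
    exact hpow.hasDerivWithinAt.congr (fun y hy => truncPow_of_nonneg (hx.trans hy))
      (truncPow_of_nonneg hx)

lemma hasDerivWithinAt_truncPow_zero (x : ℝ) :
    HasDerivWithinAt (truncPow 0) 0 (Ici x) x := by
  rcases lt_or_ge x 0 with hx | hx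
  · exact (hasDerivAt_const x (0 : ℝ)).hasDerivWithinAt.congr_of_eventuallyEq
      (nhdsWithin_le_nhds (truncPow_eventuallyEq_zero hx)) (truncPow_of_neg hx)
  · refine (hasDerivWithinAt_const x _ (1 : ℝ)).congr (fun y hy => ?_) ?_
    · simp [truncPow_of_nonneg (hx.trans hy)]
    · simp [truncPow_of_nonneg hx]

variable {r K : ℝ}

noncomputable def delayedExpSum (r K : ℝ) (N : ℕ) (t : ℝ) : ℝ :=
  ∑ j ∈ Finset.range N, K ^ j * truncPow j (t - ((j : ℝ) - 1) * r)

lemma delayedExpSum_eq_of_le (hr : 0 ≤ r) {N M : ℕ} {t : ℝ} (ht : t < ((N : ℝ) - 1) * r)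
    (hNM : N ≤ M) : delayedExpSum r K M t = delayedExpSum r K N t := by
  rw [delayedExpSum, delayedExpSum, ← Finset.sum_range_add_sum_Ico _ hNM, add_eq_left]
  refine Finset.sum_eq_zero fun j hj => ?_
  have hNj : (N : ℝ) ≤ j := by exact_mod_cast (Finset.mem_Ico.1 hj).1
  rw [truncPow_of_neg (by nlinarith), mul_zero]

lemma delayedExp_eq_delayedExpSum_one {t : ℝ} (ht : t < 0) :
    delayedExp r K t = delayedExpSum r K 1 t := by
  simp only [delayedExp, delayedExpSum, Finset.sum_range_one, ht, if_true, pow_zero, one_mul,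
    CharP.cast_eq_zero, zero_sub, neg_one_mul, sub_neg_eq_add]
  split_ifs with h
  · rw [truncPow_of_neg (by linarith)]
  · rw [truncPow_of_nonneg (by linarith)]; simp

lemma delayedExp_eq_delayedExpSum_floor (hr : 0 < r) {t : ℝ} (ht : 0 ≤ t) :
    delayedExp r K t = delayedExpSum r K (⌊t / r⌋₊ + 2) t := by
  rw [delayedExp, if_neg (by linarith), if_neg ht.not_gt, Int.floor_toNat, delayedExpSum]
  refine Finset.sum_congr rfl fun j hj => ?_
  have hj : (j : ℝ) - 1 ≤ ⌊t / r⌋₊ := by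
    have := Finset.mem_range.1 hj
    rw [sub_le_iff_le_add]; exact_mod_cast (by omega : j ≤ ⌊t / r⌋₊ + 1)
  have hfloor : (⌊t / r⌋₊ : ℝ) * r ≤ t := (le_div_iff₀ hr).1 (Nat.floor_le (by positivity))
  rw [truncPow_of_nonneg (by nlinarith), mul_div_assoc]

lemma eventually_delayedExp_eq_delayedExpSum (hr : 0 < r) (M : ℝ) :
    ∀ᶠ N in atTop, ∀ t ≤ M, delayedExp r K t = delayedExpSum r K N t := by
  filter_upwards [eventually_ge_atTop (⌈M / r⌉₊ + 2)] with N hN t ht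
  rcases lt_or_ge t 0 with h0 | h0
  · rw [delayedExp_eq_delayedExpSum_one h0]
    exact (delayedExpSum_eq_of_le (N := 1) hr.le (by simpa using h0) (by omega)).symm
  · have hlt : t < ((⌊t / r⌋₊ + 2 : ℕ) - 1 : ℝ) * r := by
      have := Nat.lt_floor_add_one (t / r)
      rw [div_lt_iff₀ hr] at this
      push_cast; linarith
    have hle : ⌊t / r⌋₊ ≤ ⌈M / r⌉₊ :=
      (Nat.floor_le_floor (div_le_div_of_nonneg_right ht hr.le)).trans (Nat.floor_le_ceil _)
    rw [delayedExp_eq_delayedExpSum_floor hr h0]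
    exact (delayedExpSum_eq_of_le hr.le hlt (by omega)).symm

lemma delayedExp_of_lt {t : ℝ} (ht : t < -r) : delayedExp r K t = 0 :=
  if_pos ht

lemma delayedExp_eq_one {t : ℝ} (h₁ : -r ≤ t) (h₂ : t ≤ 0) : delayedExp r K t = 1 := by
  rcases h₂.lt_or_eq with h₂ | rfl
  · rw [delayedExp, if_neg h₁.not_gt, if_pos h₂]
  · simp [delayedExp, h₁.not_gt, Finset.sum_range_succ]

lemma hasDerivWithinAt_delayedExpSum (N : ℕ) (t : ℝ) :
    HasDerivWithinAt (delayedExpSum r K (N + 1)) (K * delayedExpSum r K N (t - r)) (Ici t) t := by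
  have hsucc : ∀ i ∈ Finset.range N, HasDerivWithinAt
      (fun x => K ^ (i + 1) * truncPow (i + 1) (x - (((i + 1 : ℕ) : ℝ) - 1) * r))
      (K ^ (i + 1) * truncPow i (t - (((i + 1 : ℕ) : ℝ) - 1) * r)) (Ici t) t :=
    fun i _ => ((hasDerivWithinAt_truncPow_succ i _).comp_sub_const_Ici _).const_mul _
  have hzero : HasDerivWithinAt (fun x => K ^ 0 * truncPow 0 (x - (((0 : ℕ) : ℝ) - 1) * r))
      (K ^ 0 * 0) (Ici t) t :=
    ((hasDerivWithinAt_truncPow_zero _).comp_sub_const_Ici _).const_mul _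
  refine (((HasDerivWithinAt.fun_sum hsucc).add hzero).congr
    (fun x _ => Finset.sum_range_succ' _ _) (Finset.sum_range_succ' _ _)).congr_deriv ?_
  rw [mul_zero, add_zero, delayedExpSum, Finset.mul_sum]
  refine Finset.sum_congr rfl fun i _ => ?_
  rw [pow_succ', mul_assoc]
  congr 3
  push_cast
  ring

lemma continuousOn_delayedExpSum (N : ℕ) : ContinuousOn (delayedExpSum r K N) (Ici (-r)) := by
  cases N with
  | zero => exact (continuousOn_const (c := (0 : ℝ))).congr fun x _ => by simp [delayedExpSum]
  | succ N =>
    have hsucc : Continuous fun x =>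
        ∑ i ∈ Finset.range N, K ^ (i + 1) * truncPow (i + 1) (x - (((i + 1 : ℕ) : ℝ) - 1) * r) :=
      continuous_finsetSum _ fun i _ =>
        ((continuous_truncPow_succ i).comp (continuous_sub_right _)).const_mul _
    have hzero : EqOn (fun x => K ^ 0 * truncPow 0 (x - (((0 : ℕ) : ℝ) - 1) * r)) (fun _ => 1)
        (Ici (-r)) := fun x (hx : -r ≤ x) => by
      simp [truncPow_of_nonneg (show 0 ≤ x + r by linarith)]
    exact (hsucc.continuousOn.add (continuousOn_const.congr hzero)).congr
      fun x _ => Finset.sum_range_succ' _ _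

lemma measurable_delayedExpSum (N : ℕ) : Measurable (delayedExpSum r K N) :=
  Finset.measurable_fun_sum _ fun j _ =>
    ((monotone_truncPow j).measurable.comp (measurable_id.sub_const _)).const_mul _

lemma abs_delayedExpSum_le {N : ℕ} {t M : ℝ} (ht : t ≤ M) :
    |delayedExpSum r K N t| ≤ delayedExpSum r |K| N M := by
  refine (Finset.abs_sum_le_sum_abs _ _).trans (Finset.sum_le_sum fun j _ => ?_)
  rw [abs_mul, abs_pow, abs_of_nonneg (truncPow_nonneg _ _)]
  exact mul_le_mul_of_nonneg_left (monotone_truncPow j (by linarith)) (by positivity)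

-- Only a right derivative: at `t = 0` the left derivative is `0`, not `K`.
lemma hasDerivWithinAt_delayedExp (hr : 0 < r) (t : ℝ) :
    HasDerivWithinAt (delayedExp r K) (K * delayedExp r K (t - r)) (Ici t) t := by
  obtain ⟨N, hN⟩ := eventually_atTop.1 (eventually_delayedExp_eq_delayedExpSum (K := K) hr (t + 1))
  rw [hN N le_rfl (t - r) (by linarith)]
  refine (hasDerivWithinAt_delayedExpSum N t).congr_of_eventuallyEq ?_
    (hN (N + 1) (by omega) t (by linarith))
  filter_upwards [nhdsWithin_le_nhds (Iio_mem_nhds (lt_add_one t))] with x hx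
  exact hN (N + 1) (by omega) x hx.le

lemma continuousOn_delayedExp (hr : 0 < r) : ContinuousOn (delayedExp r K) (Ici (-r)) := by
  intro t ht
  obtain ⟨N, hN⟩ := (eventually_delayedExp_eq_delayedExpSum (K := K) hr (t + 1)).exists
  refine ((continuousOn_delayedExpSum N) t ht).congr_of_eventuallyEq ?_ (hN t (by linarith))
  filter_upwards [nhdsWithin_le_nhds (Iio_mem_nhds (lt_add_one t))] with x hx using hN x hx.le

lemma measurable_delayedExp (hr : 0 < r) : Measurable (delayedExp r K) :=
  measurable_of_tendsto_metrizable measurable_delayedExpSum <| tendsto_pi_nhds.2 fun t => by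
    obtain ⟨N, hN⟩ := eventually_atTop.1 (eventually_delayedExp_eq_delayedExpSum (K := K) hr t)
    exact tendsto_atTop_of_eventually_const fun n hn => (hN n hn t le_rfl).symm

lemma exists_abs_delayedExp_le (hr : 0 < r) (M : ℝ) : ∃ C, ∀ t ≤ M, |delayedExp r K t| ≤ C := by
  obtain ⟨N, hN⟩ := (eventually_delayedExp_eq_delayedExpSum (K := K) hr M).exists
  exact ⟨delayedExpSum r |K| N M, fun t ht => hN t ht ▸ abs_delayedExpSum_le ht⟩

lemma intervalIntegrable_delayedExp (hr : 0 < r) (a b : ℝ) :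
    IntervalIntegrable (delayedExp r K) volume a b := by
  obtain ⟨C, hC⟩ := exists_abs_delayedExp_le (K := K) hr (max a b)
  rw [intervalIntegrable_iff]
  refine IntegrableOn.of_bound measure_Ioc_lt_top (measurable_delayedExp hr).aestronglyMeasurable
    C ?_
  filter_upwards [ae_restrict_mem measurableSet_uIoc] with x hx using hC x hx.2

lemma integral_delayedExp_sub (hr : 0 < r) {a b : ℝ} (ha : -r ≤ a) (hb : -r ≤ b) :
    K * ∫ v in a..b, delayedExp r K (v - r) = delayedExp r K b - delayedExp r K a := by
  rw [← intervalIntegral.integral_const_mul]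
  refine intervalIntegral.integral_eq_sub_of_hasDeriv_right
    ((continuousOn_delayedExp hr).mono fun x hx => (le_min ha hb).trans hx.1)
    (fun x _ => (hasDerivWithinAt_delayedExp hr x).mono Ioi_subset_Ici_self) ?_
  simpa using
    ((intervalIntegrable_delayedExp (K := K) hr (a - r) (b - r)).comp_sub_right r).const_mul K

variable {φ φ' : ℝ → ℝ}

noncomputable def delaySolution (r K : ℝ) (φ φ' : ℝ → ℝ) (t : ℝ) : ℝ :=
  delayedExp r K t * φ (-r) + ∫ s in (-r)..0, delayedExp r K (t - r - s) * φ' s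

lemma intervalIntegrable_delayedExp_mul (hr : 0 < r) (hφ' : ContinuousOn φ' (Icc (-r) 0))
    (x : ℝ) : IntervalIntegrable (fun s => delayedExp r K (x - s) * φ' s) volume (-r) 0 := by
  have := (intervalIntegrable_delayedExp (K := K) hr (x + r) x).comp_sub_left x
  rw [sub_add_cancel_left, sub_self] at this
  exact this.mul_continuousOn (by rwa [uIcc_of_le (by linarith)])

lemma delaySolution_eq_of_mem_Icc (hr : 0 < r) (hφ : ∀ s ∈ Icc (-r) 0, HasDerivAt φ (φ' s) s)
    (hφ' : ContinuousOn φ' (Icc (-r) 0)) {t : ℝ} (ht : t ∈ Icc (-r) 0) :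
    delaySolution r K φ φ' t = φ t := by
  have hint := intervalIntegrable_delayedExp_mul (K := K) hr hφ' (t - r)
  have hleft : ∫ s in (-r)..t, delayedExp r K (t - r - s) * φ' s = φ t - φ (-r) := by
    calc ∫ s in (-r)..t, delayedExp r K (t - r - s) * φ' s = ∫ s in (-r)..t, φ' s :=
          intervalIntegral.integral_congr fun s hs => by
            rw [uIcc_of_le ht.1] at hs
            rw [delayedExp_eq_one (by linarith [hs.2]) (by linarith [hs.1, ht.2]), one_mul]
      _ = φ t - φ (-r) := by
          refine intervalIntegral.integral_eq_sub_of_hasDerivAt (fun s hs => hφ s ?_) ?_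
          · rw [uIcc_of_le ht.1] at hs; exact ⟨hs.1, hs.2.trans ht.2⟩
          · exact (hφ'.mono (Icc_subset_Icc_right ht.2)).intervalIntegrable_of_Icc ht.1
  have hright : ∫ s in t..0, delayedExp r K (t - r - s) * φ' s = 0 := by
    rw [intervalIntegral.integral_of_le ht.2]
    refine setIntegral_eq_zero_of_forall_eq_zero fun s hs => ?_
    rw [delayedExp_of_lt (by linarith [hs.1]), zero_mul]
  have htI : t ∈ uIcc (-r) 0 := Icc_subset_uIcc ht
  rw [delaySolution, delayedExp_eq_one ht.1 ht.2, ← intervalIntegral.integral_add_adjacent_intervals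
    (hint.mono_set (uIcc_subset_uIcc left_mem_uIcc htI))
    (hint.mono_set (uIcc_subset_uIcc htI right_mem_uIcc)), hleft, hright]
  ring

lemma integrableOn_delayedExp_mul (hr : 0 < r) (hφ' : ContinuousOn φ' (Icc (-r) 0)) (t : ℝ) :
    IntegrableOn (Function.uncurry fun u s => delayedExp r K (u - r - r - s) * φ' s)
      (Ioc 0 t ×ˢ Ioc (-r) 0) := by
  obtain ⟨C, hC⟩ := exists_abs_delayedExp_le (K := K) hr t
  obtain ⟨C', hC'⟩ := isCompact_Icc.exists_bound_of_continuousOn hφ'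
  have hmeas : MeasurableSet (Ioc (0 : ℝ) t ×ˢ Ioc (-r) 0) :=
    measurableSet_Ioc.prod measurableSet_Ioc
  refine IntegrableOn.of_bound
    ((Metric.isBounded_Ioc _ _).prod (Metric.isBounded_Ioc _ _)).measure_lt_top
    (((measurable_delayedExp hr).comp (by fun_prop)).aestronglyMeasurable.mul
      ((hφ'.comp continuousOn_snd fun p hp => Ioc_subset_Icc_self hp.2).aestronglyMeasurable hmeas))
    (C * C') ?_
  filter_upwards [ae_restrict_mem hmeas] with p hp
  rw [Function.uncurry_apply_pair, norm_mul]
  exact mul_le_mul (hC _ (by linarith [hp.1.2, hp.2.1])) (hC' _ (Ioc_subset_Icc_self hp.2))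
    (norm_nonneg _) ((abs_nonneg _).trans (hC t le_rfl))

lemma integral_delayedExp_shift (hr : 0 < r) {s t : ℝ} (hs : s ≤ 0) (ht : 0 ≤ t) :
    K * ∫ u in 0..t, delayedExp r K (u - r - r - s) =
      delayedExp r K (t - r - s) - delayedExp r K (0 - r - s) := by
  calc K * ∫ u in 0..t, delayedExp r K (u - r - r - s)
      = K * ∫ u in 0..t, (fun v => delayedExp r K (v - r)) (u - (r + s)) :=
        congrArg (K * ·) (intervalIntegral.integral_congr fun u _ => congrArg _ (by ring))
    _ = K * ∫ v in (0 - (r + s))..(t - (r + s)), delayedExp r K (v - r) := by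
        rw [intervalIntegral.integral_comp_sub_right (fun v => delayedExp r K (v - r))]
    _ = delayedExp r K (t - r - s) - delayedExp r K (0 - r - s) := by
        rw [integral_delayedExp_sub hr (by linarith) (by linarith), sub_add_eq_sub_sub,
          sub_add_eq_sub_sub]

lemma delaySolution_eq_add_integral (hr : 0 < r) (hφ' : ContinuousOn φ' (Icc (-r) 0)) {t : ℝ}
    (ht : 0 ≤ t) :
    delaySolution r K φ φ' t =
      delaySolution r K φ φ' 0 + K * ∫ u in 0..t, delaySolution r K φ φ' (u - r) := by
  have hF := integrableOn_delayedExp_mul (K := K) hr hφ' t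
  have hinitial : K * ∫ u in 0..t, delayedExp r K (u - r) = delayedExp r K t - 1 := by
    rw [integral_delayedExp_sub hr (by linarith) (by linarith),
      delayedExp_eq_one (by linarith) le_rfl]
  have hhistory : K * ∫ u in 0..t, ∫ s in (-r)..0, delayedExp r K (u - r - r - s) * φ' s =
      (∫ s in (-r)..0, delayedExp r K (t - r - s) * φ' s) -
        ∫ s in (-r)..0, delayedExp r K (0 - r - s) * φ' s := by
    rw [intervalIntegral_integral_swap ht (by linarith) hF, ← intervalIntegral.integral_const_mul,
      ← intervalIntegral.integral_sub (intervalIntegrable_delayedExp_mul hr hφ' (t - r))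
        (intervalIntegrable_delayedExp_mul hr hφ' (0 - r))]
    refine intervalIntegral.integral_congr fun s hs => ?_
    rw [uIcc_of_le (by linarith)] at hs
    rw [intervalIntegral.integral_mul_const, ← mul_assoc, integral_delayedExp_shift hr hs.2 ht,
      sub_mul]
  have hint : IntervalIntegrable (fun u => delayedExp r K (u - r) * φ (-r)) volume 0 t := by
    simpa using
      ((intervalIntegrable_delayedExp (K := K) hr (-r) (t - r)).comp_sub_right r).mul_const _
  simp only [delaySolution]
  rw [intervalIntegral.integral_add hint
      (intervalIntegrable_intervalIntegral_of_integrableOn ht (by linarith) hF),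
    intervalIntegral.integral_mul_const, mul_add, ← mul_assoc, hinitial, hhistory,
    delayedExp_eq_one (by linarith) le_rfl]
  ring

lemma eqOn_Ici_of_integral_eq (hr : 0 < r) {y w : ℝ → ℝ}
    (hy : ∀ t ≥ 0, y t = y 0 + K * ∫ u in 0..t, y (u - r))
    (hw : ∀ t ≥ 0, w t = w 0 + K * ∫ u in 0..t, w (u - r))
    (h : EqOn y w (Icc (-r) 0)) : EqOn y w (Ici (-r)) := by
  have hsteps : ∀ n : ℕ, EqOn y w (Icc (-r) (n * r)) := by
    intro n
    induction n with
    | zero => simpa using h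
    | succ n ih =>
      intro t ht
      rcases le_or_gt t 0 with h0 | h0
      · exact h ⟨ht.1, h0⟩
      rw [hy t h0.le, hw t h0.le, h ⟨by linarith, le_rfl⟩]
      refine congrArg (w 0 + K * ·) (intervalIntegral.integral_congr fun u hu => ih ?_)
      rw [uIcc_of_le h0.le] at hu
      push_cast at ht
      constructor <;> linarith [hu.1, hu.2, ht.2]
  intro t ht
  obtain ⟨n, hn⟩ := Archimedean.arch t hr
  exact hsteps n ⟨ht, by simpa using hn⟩

lemma eq_add_integral_of_hasDerivAt (hr : 0 ≤ r) {y : ℝ → ℝ} (hy : ContinuousOn y (Ici (-r)))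
    (hode : ∀ t > 0, HasDerivAt y (K * y (t - r)) t) {t : ℝ} (ht : 0 ≤ t) :
    y t = y 0 + K * ∫ u in 0..t, y (u - r) := by
  have hint : IntervalIntegrable (fun u => K * y (u - r)) volume 0 t := by
    refine (ContinuousOn.intervalIntegrable ?_).const_mul K
    exact hy.comp (continuous_sub_right r).continuousOn fun u hu => by
      rw [uIcc_of_le ht] at hu; simp [hu.1]
  rw [← intervalIntegral.integral_const_mul, intervalIntegral.integral_eq_sub_of_hasDerivAt_of_le ht
    (hy.mono fun x hx => by simp; linarith [hx.1]) (fun x hx => hode x hx.1) hint]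
  ring

theorem eqOn_delaySolution (hr : 0 < r) {y φ φ' : ℝ → ℝ}
    (hφ : ∀ s ∈ Icc (-r) 0, HasDerivAt φ (φ' s) s) (hφ' : ContinuousOn φ' (Icc (-r) 0))
    (hy : ContinuousOn y (Ici (-r))) (hinit : EqOn y φ (Icc (-r) 0))
    (hode : ∀ t > 0, HasDerivAt y (K * y (t - r)) t) :
    EqOn y (delaySolution r K φ φ') (Ici (-r)) :=
  eqOn_Ici_of_integral_eq hr (fun _ ht => eq_add_integral_of_hasDerivAt hr.le hy hode ht)
    (fun _ ht => delaySolution_eq_add_integral hr hφ' ht)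
    fun _ ht => (hinit ht).trans (delaySolution_eq_of_mem_Icc hr hφ hφ' ht).symm

end DelayedExp

open DelayedExp

theorem stmt_5 (r k₁ k₂ : ℝ) (hr : 0 < r) (z₀ z : ℝ → ℝ)
    (hz₀ : ContDiff ℝ 1 z₀)
    (hcont : ContinuousOn z (Set.Ici (-r)))
    (hinit : ∀ s ∈ Set.Icc (-r) (0 : ℝ), z s = z₀ s)
    (hode : ∀ t > (0 : ℝ), HasDerivAt z (k₂ * z (t - r) - k₁ * z t) t) :
    ∀ t > (0 : ℝ), z t =
      Real.exp (-k₁ * (t + r)) * delayedExp r (k₂ * Real.exp (k₁ * r)) t * z₀ (-r) +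
      ∫ s in (-r)..(0 : ℝ), Real.exp (-k₁ * (t - s)) *
        delayedExp r (k₂ * Real.exp (k₁ * r)) (t - r - s) *
        (deriv z₀ s + k₁ * z₀ s) := by
  intro t ht
  have hz₀' : Continuous (deriv z₀) := hz₀.continuous_deriv le_rfl
  have hrep := eqOn_delaySolution (K := k₂ * exp (k₁ * r)) (y := fun x => exp (k₁ * x) * z x) hr
    (fun s _ => hasDerivAt_exp_mul (c := k₁) ((hz₀.differentiable one_ne_zero s).hasDerivAt))
    (by fun_prop : Continuous fun s => exp (k₁ * s) * (deriv z₀ s + k₁ * z₀ s)).continuousOn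
    ((by fun_prop : Continuous fun x => exp (k₁ * x)).continuousOn.mul hcont)
    (fun s hs => congrArg _ (hinit s hs))
    (fun x hx => (hasDerivAt_exp_mul (hode x hx)).congr_deriv (by
      rw [show k₁ * x = k₁ * r + k₁ * (x - r) by ring, exp_add]; ring))
    (show t ∈ Ici (-r) by simp; linarith)
  have hI : ∫ s in (-r)..0, exp (-k₁ * (t - s)) * delayedExp r (k₂ * exp (k₁ * r)) (t - r - s) *
      (deriv z₀ s + k₁ * z₀ s) = exp (-k₁ * t) * ∫ s in (-r)..0,
      delayedExp r (k₂ * exp (k₁ * r)) (t - r - s) * (exp (k₁ * s) * (deriv z₀ s + k₁ * z₀ s)) := by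
    rw [← intervalIntegral.integral_const_mul]
    congr 1 with s
    rw [show -k₁ * (t - s) = -k₁ * t + k₁ * s by ring, exp_add]
    ring
  have hinv : exp (-k₁ * t) * exp (k₁ * t) = 1 := by rw [← exp_add]; simp
  rw [delaySolution] at hrep
  rw [hI, show -k₁ * (t + r) = -k₁ * t + k₁ * -r by ring, exp_add]
  linear_combination exp (-k₁ * t) * hrep - z t * hinv
end

section
/- If k₁ ≥ k₂ ≥ 0 and r > 0, then any solution z of the linear delayed ODE z'(t) + k₁ z(t) = k₂ z(t - r) with C¹ initial data on [-r,0] satisfies |z(t)| ≤ C e^{-ε(k₁ - k₂)t} for all t > 0, for some constants C > 0 and ε ∈ (0,1) (ε independent of the initial data). -/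
/-!
Choose `ε` so small that `μ = ε (k₁ - k₂)` satisfies the characteristic inequality
`k₂ e^{μ r} ≤ k₁ - μ`; this is possible by continuity at `μ = 0`. Then `C e^{-μ t}` is a
supersolution of the delay equation. Since `k₂ ≥ 0`, a strict supersolution minus a solution stays
positive: at a first zero `T` the delayed value is still nonnegative, so the derivative at `T` would
be positive, although the difference decreases to `0` from the left. Adding `δ e^t` makes
`C e^{-μ t}` strict; letting `δ → 0` and applying this to `z` and `-z` bounds `|z|`.
-/

open Real

open Set Filter Topology

theorem HasDerivAt.nonpos_of_eventually_le_left {f : ℝ → ℝ} {f' x : ℝ} (hf : HasDerivAt f f' x)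
    (h : ∀ᶠ t in 𝓝[<] x, f x ≤ f t) : f' ≤ 0 := by
  refine le_of_tendsto (hasDerivAt_iff_tendsto_slope_left_right.1 hf).1 ?_
  filter_upwards [h, self_mem_nhdsWithin] with t hft (htx : t < x)
  rw [slope_def_field]
  exact div_nonpos_of_nonneg_of_nonpos (sub_nonneg.2 hft) (sub_nonpos.2 htx.le)

section

variable {k₁ k₂ r : ℝ}

theorem exists_mem_Ioo_mul_exp_le_sub (r : ℝ) (hk : k₂ ≤ k₁) :
    ∃ ε ∈ Ioo (0 : ℝ) 1, k₂ * exp (ε * (k₁ - k₂) * r) ≤ k₁ - ε * (k₁ - k₂) := by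
  rcases hk.eq_or_lt with rfl | hlt
  · exact ⟨1 / 2, by norm_num, by simp⟩
  have hlim : Tendsto (fun ε => k₂ * exp (ε * (k₁ - k₂) * r) + ε * (k₁ - k₂)) (𝓝[>] 0) (𝓝 k₂) := by
    have hcont : Continuous fun ε => k₂ * exp (ε * (k₁ - k₂) * r) + ε * (k₁ - k₂) := by fun_prop
    simpa using (hcont.tendsto 0).mono_left (nhdsWithin_le_nhds (s := Ioi 0))
  obtain ⟨ε, hε, hεmem⟩ :=
    ((hlim.eventually (eventually_lt_nhds hlt)).and (Ioo_mem_nhdsGT one_pos)).exists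
  exact ⟨ε, hεmem, by linarith⟩

theorem pos_of_hasDerivAt_delay_gt (hr : 0 < r) (hk₂ : 0 ≤ k₂) {w w' : ℝ → ℝ}
    (hw : ContinuousOn w (Ici 0)) (hw' : ∀ t > 0, HasDerivAt w (w' t) t)
    (hineq : ∀ t > 0, k₂ * w (t - r) - k₁ * w t < w' t) (hinit : ∀ s ∈ Icc (-r) 0, 0 < w s)
    {t : ℝ} (ht : 0 ≤ t) : 0 < w t := by
  by_contra! hwt
  have hclosed : IsClosed (Icc 0 t ∩ w ⁻¹' Iic 0) :=
    (hw.mono Icc_subset_Ici_self).preimage_isClosed_of_isClosed isClosed_Icc isClosed_Iic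
  obtain ⟨T, ⟨⟨hT0, hTt⟩, hwT⟩, hTleast⟩ :=
    (isCompact_Icc.of_isClosed_subset hclosed inter_subset_left).exists_isLeast
      ⟨t, ⟨ht, le_rfl⟩, hwt⟩
  have hpos : ∀ s ∈ Ico 0 T, 0 < w s := fun s hs => by
    by_contra! hws
    exact (hTleast ⟨⟨hs.1, hs.2.le.trans hTt⟩, hws⟩).not_gt hs.2
  have hTpos : 0 < T := hT0.lt_of_ne <| by
    rintro rfl
    exact (hinit 0 ⟨by linarith, le_rfl⟩).not_ge hwT
  have hleft : ∀ᶠ s in 𝓝[<] T, 0 < w s := by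
    filter_upwards [Ioo_mem_nhdsLT hTpos] with s hs using hpos s ⟨hs.1.le, hs.2⟩
  have hwT0 : w T = 0 := le_antisymm hwT <|
    ge_of_tendsto ((hw' T hTpos).continuousAt.tendsto.mono_left nhdsWithin_le_nhds)
      (hleft.mono fun s hs => hs.le)
  have hdelay : 0 ≤ w (T - r) := by
    rcases le_or_gt (T - r) 0 with h | h
    · exact (hinit _ ⟨by linarith, h⟩).le
    · exact (hpos _ ⟨h.le, by linarith⟩).le
  have hderiv : w' T ≤ 0 :=
    (hw' T hTpos).nonpos_of_eventually_le_left (hleft.mono fun s hs => hwT0 ▸ hs.le)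
  have := hineq T hTpos
  rw [hwT0] at this
  nlinarith [mul_nonneg hk₂ hdelay]

theorem le_mul_exp_of_hasDerivAt_delay (hr : 0 < r) (hk₂ : 0 ≤ k₂) (hk : k₂ ≤ k₁) {μ C : ℝ}
    (hμ : k₂ * exp (μ * r) ≤ k₁ - μ) (hC : 0 ≤ C) {z : ℝ → ℝ} (hz : ContinuousOn z (Ici 0))
    (hz' : ∀ t > 0, HasDerivAt z (k₂ * z (t - r) - k₁ * z t) t)
    (hinit : ∀ s ∈ Icc (-r) 0, z s ≤ C * exp (-μ * s)) {t : ℝ} (ht : 0 ≤ t) :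
    z t ≤ C * exp (-μ * t) := by
  refine le_of_forall_pos_lt_add fun η hη => ?_
  set δ := η / exp t
  have hδpos : 0 < δ := by positivity
  have hg' (u : ℝ) : HasDerivAt (fun u => C * exp (-μ * u) + δ * exp u)
      (-μ * (C * exp (-μ * u)) + δ * exp u) u := by
    have h := (((hasDerivAt_id u).const_mul (-μ)).exp.const_mul C).add
      ((hasDerivAt_exp u).const_mul δ)
    exact h.congr_deriv (by simp only [id_eq]; ring)
  have hsuper (u : ℝ) : k₂ * (C * exp (-μ * (u - r)) + δ * exp (u - r))
      - k₁ * (C * exp (-μ * u) + δ * exp u) < -μ * (C * exp (-μ * u)) + δ * exp u := by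
    have hsplit : exp (-μ * (u - r)) = exp (-μ * u) * exp (μ * r) := by
      rw [← exp_add]; ring_nf
    have hdecay : C * exp (-μ * u) * (k₂ * exp (μ * r)) ≤ C * exp (-μ * u) * (k₁ - μ) :=
      mul_le_mul_of_nonneg_left hμ (by positivity)
    have hshift : k₂ * (δ * exp (u - r)) ≤ k₁ * (δ * exp u) :=
      mul_le_mul hk (mul_le_mul_of_nonneg_left (exp_le_exp.2 (by linarith)) hδpos.le)
        (by positivity) (hk₂.trans hk)
    rw [hsplit]
    nlinarith [exp_pos u]
  have hpos := pos_of_hasDerivAt_delay_gt (k₁ := k₁) hr hk₂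
    (w := fun u => C * exp (-μ * u) + δ * exp u - z u)
    ((by fun_prop : Continuous fun u => C * exp (-μ * u) + δ * exp u).continuousOn.sub hz)
    (fun u hu => (hg' u).sub (hz' u hu))
    (fun u hu => by linarith [hsuper u])
    (fun s hs => by linarith [hinit s hs, mul_pos hδpos (exp_pos s)]) ht
  have hη : δ * exp t = η := div_mul_cancel₀ η (exp_pos t).ne'
  linarith [hpos]

theorem abs_le_mul_exp_of_hasDerivAt_delay (hr : 0 < r) (hk₂ : 0 ≤ k₂) (hk : k₂ ≤ k₁) {μ C : ℝ}
    (hμ : k₂ * exp (μ * r) ≤ k₁ - μ) (hC : 0 ≤ C) {z : ℝ → ℝ} (hz : ContinuousOn z (Ici 0))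
    (hz' : ∀ t > 0, HasDerivAt z (k₂ * z (t - r) - k₁ * z t) t)
    (hinit : ∀ s ∈ Icc (-r) 0, |z s| ≤ C * exp (-μ * s)) {t : ℝ} (ht : 0 ≤ t) :
    |z t| ≤ C * exp (-μ * t) := by
  refine abs_le.2 ⟨neg_le.1 ?_, ?_⟩
  · exact le_mul_exp_of_hasDerivAt_delay hr hk₂ hk hμ hC hz.neg
      (fun t ht => (hz' t ht).neg.congr_deriv (by simp only [Pi.neg_apply]; ring))
      (fun s hs => neg_le.1 (abs_le.1 (hinit s hs)).1) ht
  · exact le_mul_exp_of_hasDerivAt_delay hr hk₂ hk hμ hC hz hz'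
      (fun s hs => (abs_le.1 (hinit s hs)).2) ht

end

theorem stmt_7 (r k₁ k₂ : ℝ) (hr : 0 < r) (hk₁ : k₁ ≥ k₂) (hk₂ : k₂ ≥ 0) :
    ∃ ε ∈ Set.Ioo (0 : ℝ) 1, ∀ z₀ z : ℝ → ℝ, ContDiff ℝ 1 z₀ →
      ContinuousOn z (Set.Ici (-r)) →
      (∀ s ∈ Set.Icc (-r) (0 : ℝ), z s = z₀ s) →
      (∀ t > (0 : ℝ), HasDerivAt z (k₂ * z (t - r) - k₁ * z t) t) →
      ∃ C > (0 : ℝ), ∀ t > (0 : ℝ),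
        |z t| ≤ C * Real.exp (-ε * (k₁ - k₂) * t) := by
  obtain ⟨ε, hε, hμ⟩ := exists_mem_Ioo_mul_exp_le_sub r hk₁
  refine ⟨ε, hε, fun z₀ z _ hz _ hz' => ?_⟩
  have hμ0 : 0 ≤ ε * (k₁ - k₂) := mul_nonneg hε.1.le (sub_nonneg.2 hk₁)
  obtain ⟨M, hM⟩ := isCompact_Icc.exists_bound_of_continuousOn (hz.mono Icc_subset_Ici_self)
  refine ⟨max M 1, by positivity, fun t ht => ?_⟩
  have hinit (s : ℝ) (hs : s ∈ Icc (-r) 0) : |z s| ≤ max M 1 * exp (-(ε * (k₁ - k₂)) * s) :=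
    calc |z s| ≤ max M 1 := (hM s hs).trans (le_max_left M 1)
      _ ≤ max M 1 * exp (-(ε * (k₁ - k₂)) * s) :=
        le_mul_of_one_le_right (by positivity) (one_le_exp (by nlinarith [hs.2]))
  have hbound := abs_le_mul_exp_of_hasDerivAt_delay hr hk₂ hk₁ hμ (by positivity)
    (hz.mono (Ici_subset_Ici.2 (by linarith))) hz' hinit ht.le
  convert hbound using 3
  ring
end

section
/- Suppose z : [-r, ∞) → ℝ is continuous, z ≥ 0 on [-r, 0], and satisfies the delayed differential inequality z'(t) + k₁ z(t) ≥ k₂ z(t - r) for t > 0, with k₁ ∈ ℝ and k₂ ≥ 0. Then z(t) ≥ 0 for all t ≥ 0. -/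
lemma gronwall_step (k₁ : ℝ) (z z' : ℝ → ℝ) (a b : ℝ) (hab : a ≤ b)
    (hc : ContinuousOn z (Set.Icc a b))
    (hd : ∀ t ∈ Set.Ioo a b, HasDerivAt z (z' t) t)
    (h0 : ∀ t ∈ Set.Ioo a b, 0 ≤ z' t + k₁ * z t)
    (hza : 0 ≤ z a) : ∀ t ∈ Set.Icc a b, 0 ≤ z t := by
  set w : ℝ → ℝ := fun t => Real.exp (k₁ * t) * z t with hw
  have hwderiv : ∀ t ∈ Set.Ioo a b,
      HasDerivAt w (Real.exp (k₁ * t) * (z' t + k₁ * z t)) t := by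
    intro t ht
    have h1 : HasDerivAt (fun x : ℝ => Real.exp (k₁ * x)) (Real.exp (k₁ * t) * (k₁ * 1)) t :=
      ((hasDerivAt_id t).const_mul k₁).exp
    have := h1.mul (hd t ht)
    exact this.congr_deriv (by ring)
  have hwmono : MonotoneOn w (Set.Icc a b) := by
    apply monotoneOn_of_deriv_nonneg (convex_Icc a b)
    · exact (Real.continuous_exp.comp (continuous_const.mul continuous_id)).continuousOn.mul hc
    · intro t ht
      rw [interior_Icc] at ht
      exact (hwderiv t ht).differentiableAt.differentiableWithinAt
    · intro t ht
      rw [interior_Icc] at ht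
      rw [(hwderiv t ht).deriv]
      exact mul_nonneg (Real.exp_pos _).le (h0 t ht)
  intro t ht
  have hwa : 0 ≤ w a := mul_nonneg (Real.exp_pos _).le hza
  have : w a ≤ w t := hwmono (Set.left_mem_Icc.mpr hab) ht ht.1
  have hwt : 0 ≤ w t := hwa.trans this
  have hwt' : 0 ≤ Real.exp (k₁ * t) * z t := hwt
  nlinarith [Real.exp_pos (k₁ * t), hwt']

theorem stmt_18 (r k₁ k₂ : ℝ) (hr : 0 < r) (hk₂ : 0 ≤ k₂)
    (z z' : ℝ → ℝ)
    (hcont : ContinuousOn z (Set.Ici (-r)))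
    (hinit : ∀ s ∈ Set.Icc (-r) (0 : ℝ), 0 ≤ z s)
    (hderiv : ∀ t > (0 : ℝ), HasDerivAt z (z' t) t)
    (hineq : ∀ t > (0 : ℝ), k₂ * z (t - r) ≤ z' t + k₁ * z t) :
    ∀ t ≥ (0 : ℝ), 0 ≤ z t := by
  have key : ∀ n : ℕ, ∀ t ∈ Set.Icc (-r) ((n : ℝ) * r), 0 ≤ z t := by
    intro n
    induction n with
    | zero => intro t ht; simp at ht; exact hinit t ⟨ht.1, ht.2⟩
    | succ n ih =>
      intro t ht
      by_cases hcase : t ≤ (n : ℝ) * r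
      · exact ih t ⟨ht.1, hcase⟩
      push_neg at hcase
      have hnr : (0 : ℝ) ≤ (n : ℝ) * r := mul_nonneg (Nat.cast_nonneg n) hr.le
      have hab : (n : ℝ) * r ≤ ((n : ℝ) + 1) * r := by nlinarith
      have hsub : Set.Icc ((n : ℝ) * r) (((n : ℝ) + 1) * r) ⊆ Set.Ici (-r) := by
        intro s hs; exact le_trans (by linarith) hs.1
      have := gronwall_step k₁ z z' ((n : ℝ) * r) (((n : ℝ) + 1) * r) hab
        (hcont.mono hsub)
        (fun s hs => hderiv s (lt_of_le_of_lt hnr hs.1))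
        (fun s hs => le_trans
          (mul_nonneg hk₂ (ih (s - r) ⟨by linarith [hs.1], by linarith [hs.2]⟩))
          (hineq s (lt_of_le_of_lt hnr hs.1)))
        (ih ((n : ℝ) * r) ⟨by linarith, le_refl _⟩)
      have hmem : t ∈ Set.Icc ((n : ℝ) * r) (((n : ℝ) + 1) * r) := by
        constructor
        · exact hcase.le
        · have := ht.2; push_cast at this ⊢; linarith
      exact this t hmem
  intro t ht
  obtain ⟨n, hn⟩ : ∃ n : ℕ, t / r ≤ n := exists_nat_ge (t / r)
  have : t ≤ (n : ℝ) * r := by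
    rw [div_le_iff₀ hr] at hn; linarith
  exact key n t ⟨by linarith, this⟩
end
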